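/- arXiv:1409.3346 — 2 statements merged into one kernel-verified Lean document; each statement's English description precedes it below -/
import Mathlib

section
/- Let Ω ⊆ ℝⁿ be a domain and let A : Ω → ℝ^{n×n} be a symmetric matrix-valued function that is locally uniformly positive definite on Ω. Let u, v : Ω → ℝ be differentiable with u ≥ 0 and v > 0 on Ω. Then for every x ∈ Ω, L_A(u,v)(x) = R_A(u,v)(x) and L_A(u,v)(x) ≥ 0, where L_A(u,v)(x) := |∇u(x)|_A^p + (p−1)(u(x)/v(x))^p |∇v(x)|_A^p − p (u(x)/v(x))^{p−1} |∇v(x)|_A^{p−2} ⟨A(x)∇v(x), ∇u(x)⟩ and R_A(u,v)(x) := |∇u(x)|_A^p − |∇v(x)|_A^{p−2} ⟨A(x)∇v(x), ∇(u^p/v^{p−1})(x)⟩. -/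
open MeasureTheory Matrix Filter Topology

noncomputable section

variable {n : ℕ}

/-- The quadratic form `⟨A ξ, ξ⟩` associated with a matrix `A`. -/
def matQ (A : Matrix (Fin n) (Fin n) ℝ) (ξ : Fin n → ℝ) : ℝ := A.mulVec ξ ⬝ᵥ ξ

/-- `|ξ|_A := ⟨A ξ, ξ⟩^{1/2}`. -/
def matNorm (A : Matrix (Fin n) (Fin n) ℝ) (ξ : Fin n → ℝ) : ℝ := Real.sqrt (matQ A ξ)

/-- The (classical) gradient of `u : ℝⁿ → ℝ`. -/
def grad (u : (Fin n → ℝ) → ℝ) (x : Fin n → ℝ) : Fin n → ℝ :=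
  fun i => fderiv ℝ u x (Pi.single i 1)

/-- `φ ∈ C_c^∞(Ω)`. -/
def IsTest (Ω : Set (Fin n → ℝ)) (φ : (Fin n → ℝ) → ℝ) : Prop :=
  ContDiff ℝ (⊤ : ℕ∞) φ ∧ HasCompactSupport φ ∧ tsupport φ ⊆ Ω

/-- The functional `Q_{A,V}(φ) = ∫_Ω (|∇φ|_A^p + V |φ|^p)`. -/
def QForm (p : ℝ) (Ω : Set (Fin n → ℝ)) (A : (Fin n → ℝ) → Matrix (Fin n) (Fin n) ℝ)
    (V : (Fin n → ℝ) → ℝ) (φ : (Fin n → ℝ) → ℝ) : ℝ :=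
  ∫ x in Ω, (matNorm (A x) (grad φ x) ^ p + V x * |φ x| ^ p)

/-- `A` is symmetric and locally uniformly positive definite in `Ω`. -/
def LocUnifPD (Ω : Set (Fin n → ℝ)) (A : (Fin n → ℝ) → Matrix (Fin n) (Fin n) ℝ) : Prop :=
  (∀ x ∈ Ω, (A x).IsSymm) ∧
  ∀ K : Set (Fin n → ℝ), K ⊆ Ω → IsCompact K →
    ∃ θ > (0:ℝ), ∀ x ∈ K, ∀ ξ : Fin n → ℝ,
      θ * (ξ ⬝ᵥ ξ) ≤ matQ (A x) ξ ∧ matQ (A x) ξ ≤ θ⁻¹ * (ξ ⬝ᵥ ξ)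

/-- `V ∈ L^∞_loc(Ω)` (measurable and locally bounded). -/
def LinfLoc (Ω : Set (Fin n → ℝ)) (V : (Fin n → ℝ) → ℝ) : Prop :=
  Measurable V ∧
  ∀ K : Set (Fin n → ℝ), K ⊆ Ω → IsCompact K → ∃ C : ℝ, ∀ x ∈ K, |V x| ≤ C

/-- `A` is locally `α`-Hölder continuous in `Ω` (entrywise). -/
def LocHolderMat (Ω : Set (Fin n → ℝ)) (A : (Fin n → ℝ) → Matrix (Fin n) (Fin n) ℝ)
    (α : ℝ) : Prop :=
  ∀ K : Set (Fin n → ℝ), K ⊆ Ω → IsCompact K → ∃ C : ℝ, ∀ x ∈ K, ∀ y ∈ K, ∀ i j,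
    |A x i j - A y i j| ≤ C * dist x y ^ α

/-- `v` is a (weak) supersolution of `Q_{A,V}(u) = 0` in `Ω`. -/
def IsSupersolution (p : ℝ) (Ω : Set (Fin n → ℝ))
    (A : (Fin n → ℝ) → Matrix (Fin n) (Fin n) ℝ) (V : (Fin n → ℝ) → ℝ)
    (v : (Fin n → ℝ) → ℝ) : Prop :=
  ∀ φ : (Fin n → ℝ) → ℝ, IsTest Ω φ → (∀ x, 0 ≤ φ x) →
    0 ≤ ∫ x in Ω, (matNorm (A x) (grad v x) ^ (p - 2) *
          ((A x).mulVec (grad v x) ⬝ᵥ grad φ x) + V x * v x ^ (p - 1) * φ x)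

/-- `v` is a (weak) solution of `Q_{A,V}(u) = 0` in `Ω`. -/
def IsSolution (p : ℝ) (Ω : Set (Fin n → ℝ))
    (A : (Fin n → ℝ) → Matrix (Fin n) (Fin n) ℝ) (V : (Fin n → ℝ) → ℝ)
    (v : (Fin n → ℝ) → ℝ) : Prop :=
  ∀ φ : (Fin n → ℝ) → ℝ, IsTest Ω φ →
    (∫ x in Ω, (matNorm (A x) (grad v x) ^ (p - 2) *
        ((A x).mulVec (grad v x) ⬝ᵥ grad φ x) + V x * v x ^ (p - 1) * φ x)) = 0

/-- `ψ` is a (weak) subsolution of `Q_{A,V}(u) = 0` in `Ω`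
(with the term `V |ψ|^{p-2} ψ`). -/
def IsSubsolution (p : ℝ) (Ω : Set (Fin n → ℝ))
    (A : (Fin n → ℝ) → Matrix (Fin n) (Fin n) ℝ) (V : (Fin n → ℝ) → ℝ)
    (ψ : (Fin n → ℝ) → ℝ) : Prop :=
  ∀ φ : (Fin n → ℝ) → ℝ, IsTest Ω φ → (∀ x, 0 ≤ φ x) →
    (∫ x in Ω, (matNorm (A x) (grad ψ x) ^ (p - 2) *
        ((A x).mulVec (grad ψ x) ⬝ᵥ grad φ x) + V x * |ψ x| ^ (p - 2) * ψ x * φ x)) ≤ 0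

/-- The Picone form `L_A(u,v)(x)`. -/
def PiconeL (p : ℝ) (A : (Fin n → ℝ) → Matrix (Fin n) (Fin n) ℝ)
    (u v : (Fin n → ℝ) → ℝ) (x : Fin n → ℝ) : ℝ :=
  matNorm (A x) (grad u x) ^ p
    + (p - 1) * (u x / v x) ^ p * matNorm (A x) (grad v x) ^ p
    - p * (u x / v x) ^ (p - 1) * matNorm (A x) (grad v x) ^ (p - 2)
        * ((A x).mulVec (grad v x) ⬝ᵥ grad u x)

/-- The Picone form `R_A(u,v)(x)`. -/
def PiconeR (p : ℝ) (A : (Fin n → ℝ) → Matrix (Fin n) (Fin n) ℝ)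
    (u v : (Fin n → ℝ) → ℝ) (x : Fin n → ℝ) : ℝ :=
  matNorm (A x) (grad u x) ^ p
    - matNorm (A x) (grad v x) ^ (p - 2)
        * ((A x).mulVec (grad v x) ⬝ᵥ grad (fun y => u y ^ p / v y ^ (p - 1)) x)

/-- The functional `Q_{A,V}` is nonnegative on `C_c^∞(Ω)`. -/
def QNonneg (p : ℝ) (Ω : Set (Fin n → ℝ)) (A : (Fin n → ℝ) → Matrix (Fin n) (Fin n) ℝ)
    (V : (Fin n → ℝ) → ℝ) : Prop :=
  ∀ φ : (Fin n → ℝ) → ℝ, IsTest Ω φ → 0 ≤ QForm p Ω A V φ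

/-- The functional `Q_{A,V}` is subcritical in `Ω`. -/
def QSubcritical (p : ℝ) (Ω : Set (Fin n → ℝ)) (A : (Fin n → ℝ) → Matrix (Fin n) (Fin n) ℝ)
    (V : (Fin n → ℝ) → ℝ) : Prop :=
  ∃ W : (Fin n → ℝ) → ℝ, ContinuousOn W Ω ∧ (∀ x ∈ Ω, 0 ≤ W x) ∧ (∃ x ∈ Ω, W x ≠ 0) ∧
    ∀ φ : (Fin n → ℝ) → ℝ, IsTest Ω φ →
      (∫ x in Ω, W x * |φ x| ^ p) ≤ QForm p Ω A V φ

/-- The functional `Q_{A,V}` is critical in `Ω`. -/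
def QCritical (p : ℝ) (Ω : Set (Fin n → ℝ)) (A : (Fin n → ℝ) → Matrix (Fin n) (Fin n) ℝ)
    (V : (Fin n → ℝ) → ℝ) : Prop :=
  QNonneg p Ω A V ∧ ¬ QSubcritical p Ω A V

/-- The functional `Q_{A,V}` is supercritical in `Ω` (not nonnegative). -/
def QSupercritical (p : ℝ) (Ω : Set (Fin n → ℝ)) (A : (Fin n → ℝ) → Matrix (Fin n) (Fin n) ℝ)
    (V : (Fin n → ℝ) → ℝ) : Prop :=
  ¬ QNonneg p Ω A V

/-- A null sequence for `Q_{A,V}` in `Ω`. -/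
def IsNullSeq (p : ℝ) (Ω : Set (Fin n → ℝ)) (A : (Fin n → ℝ) → Matrix (Fin n) (Fin n) ℝ)
    (V : (Fin n → ℝ) → ℝ) (φs : ℕ → (Fin n → ℝ) → ℝ) : Prop :=
  (∀ k, IsTest Ω (φs k) ∧ ∀ x, 0 ≤ φs k x) ∧
  (∃ B : Set (Fin n → ℝ), IsOpen B ∧ IsCompact (closure B) ∧ closure B ⊆ Ω ∧
      ∀ k, (∫ x in B, |φs k x| ^ p) = 1) ∧
  Tendsto (fun k => QForm p Ω A V (φs k)) atTop (nhds 0)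

/-- A ground state of `Q_{A,V}` in `Ω`: a positive function which is an `L^p_loc` limit of
a null sequence. -/
def IsGroundState (p : ℝ) (Ω : Set (Fin n → ℝ)) (A : (Fin n → ℝ) → Matrix (Fin n) (Fin n) ℝ)
    (V : (Fin n → ℝ) → ℝ) (φ : (Fin n → ℝ) → ℝ) : Prop :=
  (∀ x ∈ Ω, 0 < φ x) ∧
  ∃ φs : ℕ → (Fin n → ℝ) → ℝ, IsNullSeq p Ω A V φs ∧
    ∀ K : Set (Fin n → ℝ), K ⊆ Ω → IsCompact K →
      Tendsto (fun k => ∫ x in K, |φs k x - φ x| ^ p) atTop (nhds 0)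


/-- Entrywise measurability of a matrix-valued map. -/
def MeasurableMat (A : (Fin n → ℝ) → Matrix (Fin n) (Fin n) ℝ) : Prop :=
  ∀ i j, Measurable fun x => A x i j

/-
With `t = u/v`, the chain rule gives `∇(u^p/v^{p-1}) = p t^{p-1} ∇u - (p-1) t^p ∇v`, and
`|∇v|_A^{p-2} ⟨A∇v, ∇v⟩ = |∇v|_A^p`, so `L = R` pointwise. For `L ≥ 0`, Cauchy–Schwarz for the
semi-inner product `⟨Aξ, η⟩` bounds `⟨A∇v, ∇u⟩` by `|∇u|_A |∇v|_A`, and Young's inequality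
`p a c^{p-1} ≤ a^p + (p-1) c^p` with `a = |∇u|_A`, `c = t |∇v|_A` concludes.
-/

section MatrixForm

variable {M : Matrix (Fin n) (Fin n) ℝ}

lemma sq_mulVec_dotProduct_le_matQ_mul_matQ (hM : M.PosSemidef) (ξ η : Fin n → ℝ) :
    (M *ᵥ η ⬝ᵥ ξ) ^ 2 ≤ matQ M ξ * matQ M η := by
  let _ := M.toSeminormedAddCommGroup hM
  let _ := M.toInnerProductSpace hM
  exact (sq _).trans_le (real_inner_mul_inner_self_le ξ η)

lemma matQ_nonneg (hM : M.PosSemidef) (ξ : Fin n → ℝ) : 0 ≤ matQ M ξ :=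
  (hM.dotProduct_mulVec_nonneg ξ).trans_eq (dotProduct_comm _ _)

lemma mulVec_dotProduct_le_matNorm_mul_matNorm (hM : M.PosSemidef) (ξ η : Fin n → ℝ) :
    M *ᵥ η ⬝ᵥ ξ ≤ matNorm M ξ * matNorm M η := by
  rw [matNorm, matNorm, ← Real.sqrt_mul (matQ_nonneg hM ξ)]
  exact (le_abs_self _).trans (Real.abs_le_sqrt (sq_mulVec_dotProduct_le_matQ_mul_matQ hM ξ η))

lemma matNorm_rpow_sub_two_mul_matQ (hM : M.PosSemidef) (ξ : Fin n → ℝ) {p : ℝ} (hp : p ≠ 0) :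
    matNorm M ξ ^ (p - 2) * matQ M ξ = matNorm M ξ ^ p := by
  have hq : matQ M ξ = matNorm M ξ ^ (2 : ℝ) := by
    rw [Real.rpow_two, matNorm, Real.sq_sqrt (matQ_nonneg hM ξ)]
  have h0 : 0 ≤ matNorm M ξ := Real.sqrt_nonneg _
  rw [hq, ← Real.rpow_add' h0 (by simpa using hp), sub_add_cancel]

end MatrixForm

lemma LocUnifPD.posSemidef {Ω : Set (Fin n → ℝ)} {A : (Fin n → ℝ) → Matrix (Fin n) (Fin n) ℝ}
    (hA : LocUnifPD Ω A) {x : Fin n → ℝ} (hx : x ∈ Ω) : (A x).PosSemidef := by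
  obtain ⟨θ, hθ, hbd⟩ := hA.2 {x} (Set.singleton_subset_iff.2 hx) isCompact_singleton
  refine .of_dotProduct_mulVec_nonneg (hA.1 x hx) fun ξ => ?_
  rw [dotProduct_comm]
  exact (mul_nonneg hθ.le (dotProduct_star_self_nonneg ξ)).trans (hbd x rfl ξ).1

theorem HasFDerivAt.rpow_div_rpow_sub_one {E : Type*} [NormedAddCommGroup E] [NormedSpace ℝ E]
    {u v : E → ℝ} {u' v' : E →L[ℝ] ℝ} {x : E} {p : ℝ} (hu : HasFDerivAt u u' x)
    (hv : HasFDerivAt v v' x) (hp : 1 ≤ p) (hux : 0 ≤ u x) (hvx : 0 < v x) :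
    HasFDerivAt (fun y => u y ^ p / v y ^ (p - 1))
      ((p * (u x / v x) ^ (p - 1)) • u' - ((p - 1) * (u x / v x) ^ p) • v') x := by
  have hvp : v x ^ (p - 1) ≠ 0 := (Real.rpow_pos_of_pos hvx _).ne'
  have h : HasFDerivAt (fun y => u y ^ p * (v y ^ (p - 1))⁻¹) _ x :=
    (hu.rpow_const (Or.inr hp)).mul
      ((hasDerivAt_inv hvp).comp_hasFDerivAt x (hv.rpow_const (p := p - 1) (Or.inl hvx.ne')))
  simp only [div_eq_mul_inv] at h ⊢
  refine h.congr_fderiv ?_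
  have e1 : v x ^ p = v x ^ (p - 1) * v x := by
    rw [← Real.rpow_add_one hvx.ne', sub_add_cancel]
  have e2 : v x ^ (p - 1 - 1) = v x ^ (p - 1) / v x := Real.rpow_sub_one hvx.ne' _
  rw [Real.mul_rpow hux (inv_nonneg.2 hvx.le), Real.mul_rpow hux (inv_nonneg.2 hvx.le),
    Real.inv_rpow hvx.le, Real.inv_rpow hvx.le, e1, e2]
  match_scalars <;> field_simp

lemma young_mul_rpow_sub_one_le {p a c : ℝ} (hp : 1 < p) (ha : 0 ≤ a) (hc : 0 ≤ c) :
    p * (a * c ^ (p - 1)) ≤ a ^ p + (p - 1) * c ^ p := by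
  have hq : p.HolderConjugate (p / (p - 1)) := (Real.holderConjugate_iff_eq_conjExponent hp).2 rfl
  have h := Real.young_inequality_of_nonneg ha (Real.rpow_nonneg hc (p - 1)) hq
  rw [← Real.rpow_mul hc, mul_div_cancel₀ p (sub_ne_zero.2 hp.ne')] at h
  calc p * (a * c ^ (p - 1)) ≤ p * (a ^ p / p + c ^ p / (p / (p - 1))) :=
        mul_le_mul_of_nonneg_left h (by linarith)
    _ = a ^ p + (p - 1) * c ^ p := by field_simp

lemma picone_scalar_nonneg {p a b t s : ℝ} (hp : 1 < p) (ha : 0 ≤ a) (hb : 0 ≤ b)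
    (ht : 0 ≤ t) (hs : s ≤ a * b) :
    0 ≤ a ^ p + (p - 1) * t ^ p * b ^ p - p * t ^ (p - 1) * b ^ (p - 2) * s := by
  -- No case split on `b = 0` (where `0 ^ (p - 2)` is a junk value): this holds as `p ≠ 1`.
  have hbp : b ^ (p - 2) * b = b ^ (p - 1) := by
    rw [← Real.rpow_add_one' hb (by linarith)]; ring_nf
  have hcs : b ^ (p - 2) * s ≤ a * b ^ (p - 1) := calc
    b ^ (p - 2) * s ≤ b ^ (p - 2) * (a * b) :=
      mul_le_mul_of_nonneg_left hs (Real.rpow_nonneg hb _)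
    _ = a * b ^ (p - 1) := by rw [← hbp]; ring
  have key : p * t ^ (p - 1) * b ^ (p - 2) * s ≤ a ^ p + (p - 1) * t ^ p * b ^ p := calc
    p * t ^ (p - 1) * b ^ (p - 2) * s = p * t ^ (p - 1) * (b ^ (p - 2) * s) := by ring
    _ ≤ p * t ^ (p - 1) * (a * b ^ (p - 1)) :=
      mul_le_mul_of_nonneg_left hcs (mul_nonneg (by linarith) (Real.rpow_nonneg ht _))
    _ = p * (a * (t * b) ^ (p - 1)) := by rw [Real.mul_rpow ht hb]; ring
    _ ≤ a ^ p + (p - 1) * (t * b) ^ p := young_mul_rpow_sub_one_le hp ha (mul_nonneg ht hb)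
    _ = a ^ p + (p - 1) * t ^ p * b ^ p := by rw [Real.mul_rpow ht hb]; ring
  linarith

lemma grad_rpow_div_rpow_sub_one {u v : (Fin n → ℝ) → ℝ} {x : Fin n → ℝ} {p : ℝ}
    (hu : DifferentiableAt ℝ u x) (hv : DifferentiableAt ℝ v x) (hp : 1 ≤ p) (hux : 0 ≤ u x)
    (hvx : 0 < v x) :
    grad (fun y => u y ^ p / v y ^ (p - 1)) x
      = (p * (u x / v x) ^ (p - 1)) • grad u x - ((p - 1) * (u x / v x) ^ p) • grad v x := by
  ext i
  simp [grad, (hu.hasFDerivAt.rpow_div_rpow_sub_one hv.hasFDerivAt hp hux hvx).fderiv]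

theorem picone_identity_general
    (n : ℕ) (p : ℝ) (hp : 1 < p)
    (Ω : Set (Fin n → ℝ))
    (A : (Fin n → ℝ) → Matrix (Fin n) (Fin n) ℝ) (hA : LocUnifPD Ω A)
    (u v : (Fin n → ℝ) → ℝ)
    (hu : ∀ x ∈ Ω, DifferentiableAt ℝ u x)
    (hv : ∀ x ∈ Ω, DifferentiableAt ℝ v x)
    (hu0 : ∀ x ∈ Ω, 0 ≤ u x) (hv0 : ∀ x ∈ Ω, 0 < v x) :
    ∀ x ∈ Ω, PiconeL p A u v x = PiconeR p A u v x ∧ 0 ≤ PiconeL p A u v x := by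
  intro x hx
  have hM := hA.posSemidef hx
  refine ⟨?_, picone_scalar_nonneg hp (Real.sqrt_nonneg _) (Real.sqrt_nonneg _)
    (div_nonneg (hu0 x hx) (hv0 x hx).le) (mulVec_dotProduct_le_matNorm_mul_matNorm hM _ _)⟩
  have hnorm := matNorm_rpow_sub_two_mul_matQ hM (grad v x) (zero_lt_one.trans hp).ne'
  rw [matQ] at hnorm
  simp only [PiconeL, PiconeR, grad_rpow_div_rpow_sub_one (hu x hx) (hv x hx) hp.le (hu0 x hx)
    (hv0 x hx), dotProduct_sub, dotProduct_smul, smul_eq_mul]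
  linear_combination (1 - p) * (u x / v x) ^ p * hnorm

/-- **Picone identity** for the `(p,A)`-Laplacian: for differentiable `u ≥ 0`, `v > 0` on a
domain `Ω`, the forms `L_A(u,v)` and `R_A(u,v)` coincide and are nonnegative on `Ω`. -/
theorem picone_identity
    (n : ℕ) (hn : 2 ≤ n) (p : ℝ) (hp : 1 < p)
    (Ω : Set (Fin n → ℝ)) (hΩo : IsOpen Ω) (hΩc : IsConnected Ω)
    (A : (Fin n → ℝ) → Matrix (Fin n) (Fin n) ℝ) (hA : LocUnifPD Ω A)
    (u v : (Fin n → ℝ) → ℝ)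
    (hu : ∀ x ∈ Ω, DifferentiableAt ℝ u x)
    (hv : ∀ x ∈ Ω, DifferentiableAt ℝ v x)
    (hu0 : ∀ x ∈ Ω, 0 ≤ u x) (hv0 : ∀ x ∈ Ω, 0 < v x) :
    ∀ x ∈ Ω, PiconeL p A u v x = PiconeR p A u v x ∧ 0 ≤ PiconeL p A u v x :=
  picone_identity_general n p hp Ω A hA u v hu hv hu0 hv0

end
end

section
/- Let Ω ⊆ ℝⁿ be a domain and let A : Ω → ℝ^{n×n} be a symmetric matrix-valued function that is locally uniformly positive definite on Ω. Let u, v ∈ C¹(Ω) with u ≥ 0 and v > 0 on Ω. If L_A(u,v)(x) = 0 for almost every x ∈ Ω, then there exists a constant k ≥ 0 such that u = k·v on Ω. Conversely, if u = k·v for some k ≥ 0, then L_A(u,v) ≡ 0 on Ω. -/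
open MeasureTheory Matrix Filter Topology

noncomputable section

variable {n : ℕ}

/-!
Where `L_A(u,v)` vanishes, write `t = u/v`, `a = |∇u|_A`, `b = |∇v|_A`. Cauchy–Schwarz for
`⟨A·,·⟩` bounds `L_A(u,v)` below by `a^p - (m^p + p m^{p-1}(a - m))` with `m = t b`, which is
positive unless `a = m` by strict convexity of `s ↦ s^p`; then Cauchy–Schwarz is an equality too,
so `|∇u - t ∇v|_A = 0` and `∇u = (u/v) ∇v`, i.e. `∇(u/v) = 0`. This gradient is continuous, so
vanishing a.e. on the open set `Ω` it vanishes everywhere, and `u/v` is constant on the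
connected `Ω`.
-/

theorem Real.rpow_tangent_lt {p a m : ℝ} (hp : 1 < p) (ha : 0 ≤ a) (hm : 0 ≤ m) (hne : a ≠ m) :
    m ^ p + p * m ^ (p - 1) * (a - m) < a ^ p := by
  rcases hm.eq_or_lt with rfl | hm
  · rw [Real.zero_rpow (by linarith), Real.zero_rpow (by linarith)]
    simpa using Real.rpow_pos_of_pos (lt_of_le_of_ne ha (Ne.symm hne)) p
  set s := a / m
  have hs0 : 0 ≤ s := div_nonneg ha hm.le
  have hs : a = s * m := (div_mul_cancel₀ a hm.ne').symm
  have hbernoulli : 1 + p * (s - 1) < (1 + (s - 1)) ^ p :=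
    one_add_mul_self_lt_rpow_one_add (by linarith)
      (fun h => hne (by rw [hs, sub_eq_zero.1 h, one_mul])) hp
  have hmp : m ^ p = m ^ (p - 1) * m := by
    rw [← Real.rpow_add_one hm.ne', sub_add_cancel]
  calc m ^ p + p * m ^ (p - 1) * (a - m) = m ^ p * (1 + p * (s - 1)) := by
        rw [hmp, hs]; ring
    _ < m ^ p * (1 + (s - 1)) ^ p := mul_lt_mul_of_pos_left hbernoulli (by positivity)
    _ = a ^ p := by rw [add_sub_cancel, ← Real.mul_rpow hm.le hs0, mul_comm, ← hs]

section QuadraticForm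

variable {A : Matrix (Fin n) (Fin n) ℝ}

theorem Matrix.IsSymm.mulVec_dotProduct_comm (hA : A.IsSymm) (ξ η : Fin n → ℝ) :
    A *ᵥ ξ ⬝ᵥ η = A *ᵥ η ⬝ᵥ ξ := by
  rw [dotProduct_comm, dotProduct_mulVec, ← mulVec_transpose, hA.eq]

variable (A) in
theorem matQ_eq_dotProduct_mulVec (ξ : Fin n → ℝ) : matQ A ξ = star ξ ⬝ᵥ (A *ᵥ ξ) :=
  dotProduct_comm _ _

theorem matQ_sub_smul (hA : A.IsSymm) (t : ℝ) (ξ η : Fin n → ℝ) :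
    matQ A (ξ - t • η) = matQ A ξ - 2 * t * (A *ᵥ η ⬝ᵥ ξ) + t ^ 2 * matQ A η := by
  simp only [matQ, mulVec_sub, mulVec_smul, sub_dotProduct, dotProduct_sub, smul_dotProduct,
    dotProduct_smul, smul_eq_mul, hA.mulVec_dotProduct_comm ξ η]
  ring

variable (A) in
theorem matNorm_nonneg (ξ : Fin n → ℝ) : 0 ≤ matNorm A ξ :=
  Real.sqrt_nonneg _

variable (A) in
theorem matNorm_smul {t : ℝ} (ht : 0 ≤ t) (ξ : Fin n → ℝ) :
    matNorm A (t • ξ) = t * matNorm A ξ := by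
  have hQ : matQ A (t • ξ) = t ^ 2 * matQ A ξ := by
    simp only [matQ, mulVec_smul, smul_dotProduct, dotProduct_smul, smul_eq_mul]
    ring
  rw [matNorm, hQ, Real.sqrt_mul (sq_nonneg t), Real.sqrt_sq ht, matNorm]

theorem Matrix.PosSemidef.matQ_nonneg (hA : A.PosSemidef) (ξ : Fin n → ℝ) : 0 ≤ matQ A ξ :=
  matQ_eq_dotProduct_mulVec A ξ ▸ hA.dotProduct_mulVec_nonneg ξ

theorem Matrix.PosSemidef.matNorm_sq (hA : A.PosSemidef) (ξ : Fin n → ℝ) :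
    matNorm A ξ ^ 2 = matQ A ξ :=
  Real.sq_sqrt (hA.matQ_nonneg ξ)

theorem Matrix.PosSemidef.mulVec_dotProduct_le (hA : A.PosSemidef) (ξ η : Fin n → ℝ) :
    A *ᵥ η ⬝ᵥ ξ ≤ matNorm A ξ * matNorm A η := by
  let B : LinearMap.BilinForm ℝ (Fin n → ℝ) := Matrix.toLinearMap₂' ℝ A
  have hB (ζ ζ' : Fin n → ℝ) : B ζ ζ' = A *ᵥ ζ' ⬝ᵥ ζ := by
    rw [Matrix.toLinearMap₂'_apply', dotProduct_comm]
  have hcs := B.apply_mul_apply_le_of_forall_zero_le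
    (fun ζ => (hB ζ ζ).symm ▸ hA.matQ_nonneg ζ) ξ η
  rw [hB, hB, hB, hB, (isHermitian_iff_isSymm.1 hA.isHermitian).mulVec_dotProduct_comm ξ η,
    ← sq, ← matQ, ← matQ, ← hA.matNorm_sq, ← hA.matNorm_sq, ← mul_pow] at hcs
  exact (abs_le_of_sq_le_sq' hcs (mul_nonneg (matNorm_nonneg A ξ) (matNorm_nonneg A η))).2

theorem Matrix.PosDef.matQ_pos (hA : A.PosDef) {ξ : Fin n → ℝ} (hξ : ξ ≠ 0) : 0 < matQ A ξ :=
  matQ_eq_dotProduct_mulVec A ξ ▸ hA.dotProduct_mulVec_pos hξ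

theorem Matrix.PosDef.matNorm_pos (hA : A.PosDef) {ξ : Fin n → ℝ} (hξ : ξ ≠ 0) :
    0 < matNorm A ξ :=
  Real.sqrt_pos.2 (hA.matQ_pos hξ)

end QuadraticForm

def piconeForm (p : ℝ) (A : Matrix (Fin n) (Fin n) ℝ) (t : ℝ) (ξ η : Fin n → ℝ) : ℝ :=
  matNorm A ξ ^ p + (p - 1) * t ^ p * matNorm A η ^ p
    - p * t ^ (p - 1) * matNorm A η ^ (p - 2) * (A *ᵥ η ⬝ᵥ ξ)

theorem piconeL_eq_piconeForm (p : ℝ) (A : (Fin n → ℝ) → Matrix (Fin n) (Fin n) ℝ)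
    (u v : (Fin n → ℝ) → ℝ) (x : Fin n → ℝ) :
    PiconeL p A u v x = piconeForm p (A x) (u x / v x) (grad u x) (grad v x) :=
  rfl

section PiconeForm

variable {A : Matrix (Fin n) (Fin n) ℝ} {p t : ℝ} {ξ η : Fin n → ℝ}

theorem piconeForm_of_smul_eq_zero (hp : 1 < p) (h : t • η = 0) :
    piconeForm p A t ξ η = matNorm A ξ ^ p := by
  have hp0 : p ≠ 0 := by linarith
  rcases smul_eq_zero.1 h with rfl | rfl
  · simp [piconeForm, Real.zero_rpow hp0, Real.zero_rpow (sub_ne_zero.2 hp.ne')]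
  · simp [piconeForm, matNorm, matQ, Real.zero_rpow hp0]

theorem Matrix.PosSemidef.piconeForm_smul_self (hA : A.PosSemidef) (hp : p ≠ 0) (ht : 0 ≤ t)
    (η : Fin n → ℝ) : piconeForm p A t (t • η) η = 0 := by
  have ht' : t ^ (p - 1) * t = t ^ p := by
    rw [← Real.rpow_add_one' ht (by simpa using hp), sub_add_cancel]
  have hb : matNorm A η ^ (p - 2) * matNorm A η ^ 2 = matNorm A η ^ p := by
    rw [← Real.rpow_natCast, ← Real.rpow_add' (matNorm_nonneg A η) (by simpa using hp)]
    norm_num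
  rw [piconeForm, matNorm_smul A ht, dotProduct_smul, smul_eq_mul, ← matQ, ← hA.matNorm_sq,
    Real.mul_rpow ht (matNorm_nonneg A η)]
  linear_combination (-p * (matNorm A η ^ (p - 2) * matNorm A η ^ 2)) * ht' - p * t ^ p * hb

theorem Matrix.PosDef.eq_smul_of_piconeForm_eq_zero (hA : A.PosDef) (hp : 1 < p) (ht : 0 ≤ t)
    (h : piconeForm p A t ξ η = 0) : ξ = t • η := by
  by_cases htη : t • η = 0
  · rw [piconeForm_of_smul_eq_zero hp htη] at h
    rw [htη]
    by_contra hξ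
    exact (Real.rpow_pos_of_pos (hA.matNorm_pos hξ) p).ne' h
  obtain ⟨ht0, hη⟩ := smul_ne_zero_iff.1 htη
  replace ht : 0 < t := lt_of_le_of_ne ht (Ne.symm ht0)
  set a := matNorm A ξ
  set b := matNorm A η
  set B := A *ᵥ η ⬝ᵥ ξ
  have hb : 0 < b := hA.matNorm_pos hη
  set c := t ^ (p - 1) * b ^ (p - 2)
  have hc : 0 < c := by positivity
  have hcb : c * b = (t * b) ^ (p - 1) := by
    rw [Real.mul_rpow ht.le hb.le, mul_assoc, ← Real.rpow_add_one hb.ne']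
    ring_nf
  have hcb2 : c * (t * b ^ 2) = (t * b) ^ p := by
    rw [show c * (t * b ^ 2) = c * b * (t * b) by ring, hcb, ← Real.rpow_add_one (by positivity)]
    ring_nf
  have hL : a ^ p + (p - 1) * (t * b) ^ p - p * c * B = 0 := by
    rw [← h, piconeForm, Real.mul_rpow ht.le hb.le]
    ring
  have hB : p * c * B ≤ p * c * (a * b) :=
    mul_le_mul_of_nonneg_left (hA.posSemidef.mulVec_dotProduct_le ξ η) (by positivity)
  have ha : a = t * b := by
    by_contra hne
    have htangent := Real.rpow_tangent_lt hp (matNorm_nonneg A ξ) (by positivity) hne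
    rw [← hcb] at htangent
    linarith [congrArg (p * ·) hcb2]
  have hBeq : B = t * b ^ 2 := by
    rw [ha, ← hcb2] at hL
    have : p * c * (t * b ^ 2 - B) = 0 := by linarith
    simpa [sub_eq_zero, hc.ne', (by linarith : p ≠ 0), eq_comm] using this
  have hQ : matQ A (ξ - t • η) = 0 := by
    rw [matQ_sub_smul (isHermitian_iff_isSymm.1 hA.isHermitian), ← hA.posSemidef.matNorm_sq,
      ← hA.posSemidef.matNorm_sq]
    change a ^ 2 - 2 * t * B + t ^ 2 * b ^ 2 = 0
    rw [hBeq, ha]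
    ring
  by_contra hne
  exact (hA.matQ_pos (sub_ne_zero.2 hne)).ne' hQ

theorem Matrix.PosDef.piconeForm_eq_zero_iff (hA : A.PosDef) (hp : 1 < p) (ht : 0 ≤ t) :
    piconeForm p A t ξ η = 0 ↔ ξ = t • η :=
  ⟨hA.eq_smul_of_piconeForm_eq_zero hp ht,
    fun h => h ▸ hA.posSemidef.piconeForm_smul_self (by linarith) ht η⟩

end PiconeForm

theorem LocUnifPD.posDef {Ω : Set (Fin n → ℝ)} {A : (Fin n → ℝ) → Matrix (Fin n) (Fin n) ℝ}
    (hA : LocUnifPD Ω A) {x : Fin n → ℝ} (hx : x ∈ Ω) : (A x).PosDef := by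
  refine .of_dotProduct_mulVec_pos (isHermitian_iff_isSymm.2 (hA.1 x hx)) fun ξ hξ => ?_
  obtain ⟨θ, hθ, hbound⟩ := hA.2 {x} (Set.singleton_subset_iff.2 hx) isCompact_singleton
  rw [← matQ_eq_dotProduct_mulVec]
  exact (mul_pos hθ (by simpa using dotProduct_star_self_pos_iff.2 hξ)).trans_le
    (hbound x rfl ξ).1

theorem grad_eq_smul_iff {u v : (Fin n → ℝ) → ℝ} {x : Fin n → ℝ} {c : ℝ} :
    grad u x = c • grad v x ↔ fderiv ℝ u x = c • fderiv ℝ v x := by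
  refine ⟨fun h => ContinuousLinearMap.coe_injective <| (Pi.basisFun ℝ (Fin n)).ext fun i => ?_,
    fun h => funext fun i => by simp [grad, h]⟩
  simpa [grad] using congrFun h i

theorem HasFDerivAt.div {E 𝕜 : Type*} [NontriviallyNormedField 𝕜] [NormedAddCommGroup E]
    [NormedSpace 𝕜 E] {c d : E → 𝕜} {c' d' : E →L[𝕜] 𝕜} {x : E} (hc : HasFDerivAt c c' x)
    (hd : HasFDerivAt d d' x) (hx : d x ≠ 0) :
    HasFDerivAt (fun y => c y / d y) ((d x)⁻¹ • (c' - (c x / d x) • d')) x := by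
  simp only [div_eq_mul_inv]
  refine (hc.mul ((hasDerivAt_inv hx).comp_hasFDerivAt x hd)).congr_fderiv ?_
  ext ξ
  simp only [Function.comp_apply, _root_.add_apply,
    _root_.smul_apply, _root_.sub_apply, smul_eq_mul, neg_mul, mul_neg]
  field_simp
  ring

theorem IsOpen.exists_eq_const_of_ae_fderiv_eq_zero {E F : Type*} [NormedAddCommGroup E]
    [NormedSpace ℝ E] [MeasurableSpace E] {μ : Measure E} [μ.IsOpenPosMeasure]
    [NormedAddCommGroup F] [NormedSpace ℝ F] {f : E → F} {s : Set E} (hs : IsOpen s)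
    (hs' : IsPreconnected s) (hf : ContDiffOn ℝ 1 f s)
    (hf' : ∀ᵐ x ∂μ.restrict s, fderiv ℝ f x = 0) : ∃ c, ∀ x ∈ s, f x = c :=
  hs.exists_is_const_of_fderiv_eq_zero hs' (hf.differentiableOn one_ne_zero)
    (Measure.eqOn_open_of_ae_eq hf' hs (hf.continuousOn_fderiv_of_isOpen hs le_rfl)
      continuousOn_const)

theorem picone_equality_case_general
    (n : ℕ) (p : ℝ) (hp : 1 < p)
    (Ω : Set (Fin n → ℝ)) (hΩo : IsOpen Ω) (hΩc : IsConnected Ω)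
    (A : (Fin n → ℝ) → Matrix (Fin n) (Fin n) ℝ) (hA : LocUnifPD Ω A)
    (u v : (Fin n → ℝ) → ℝ)
    (hu : ContDiffOn ℝ 1 u Ω) (hv : ContDiffOn ℝ 1 v Ω)
    (hu0 : ∀ x ∈ Ω, 0 ≤ u x) (hv0 : ∀ x ∈ Ω, 0 < v x) :
    ((∀ᵐ x ∂(volume.restrict Ω), PiconeL p A u v x = 0) →
      ∃ k : ℝ, 0 ≤ k ∧ ∀ x ∈ Ω, u x = k * v x) ∧
    (∀ k : ℝ, 0 ≤ k → (∀ x ∈ Ω, u x = k * v x) →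
      ∀ x ∈ Ω, PiconeL p A u v x = 0) := by
  have hdiff {f : (Fin n → ℝ) → ℝ} (hf : ContDiffOn ℝ 1 f Ω) {x} (hx : x ∈ Ω) :
      DifferentiableAt ℝ f x :=
    (hf.contDiffAt (hΩo.mem_nhds hx)).differentiableAt one_ne_zero
  refine ⟨fun hL => ?_, fun k hk huv x hx => ?_⟩
  · have hquot : ∀ᵐ x ∂volume.restrict Ω, fderiv ℝ (fun y => u y / v y) x = 0 := by
      filter_upwards [hL, ae_restrict_mem hΩo.measurableSet] with x hLx hx
      have hgrad := ((hA.posDef hx).piconeForm_eq_zero_iff hp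
        (div_nonneg (hu0 x hx) (hv0 x hx).le)).1 hLx
      rw [((hdiff hu hx).hasFDerivAt.div (hdiff hv hx).hasFDerivAt (hv0 x hx).ne').fderiv,
        ← grad_eq_smul_iff.1 hgrad, sub_self, smul_zero]
    obtain ⟨k, hk⟩ := hΩo.exists_eq_const_of_ae_fderiv_eq_zero hΩc.isPreconnected
      (hu.div hv fun x hx => (hv0 x hx).ne') hquot
    obtain ⟨x₀, hx₀⟩ := hΩc.nonempty
    refine ⟨k, hk x₀ hx₀ ▸ div_nonneg (hu0 x₀ hx₀) (hv0 x₀ hx₀).le, fun x hx => ?_⟩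
    rw [← hk x hx, Pi.div_apply, div_mul_cancel₀ _ (hv0 x hx).ne']
  · have hfderiv : fderiv ℝ u x = k • fderiv ℝ v x := by
      rw [Filter.eventuallyEq_of_mem (hΩo.mem_nhds hx) huv |>.fderiv_eq,
        fderiv_const_mul (hdiff hv hx)]
    rw [piconeL_eq_piconeForm, huv x hx, mul_div_cancel_right₀ _ (hv0 x hx).ne',
      (hA.posDef hx).piconeForm_eq_zero_iff hp hk]
    exact grad_eq_smul_iff.2 hfderiv

/-- Equality case in the Picone identity: for `u, v ∈ C¹(Ω)` with `u ≥ 0`, `v > 0`,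
`L_A(u,v) = 0` a.e. in `Ω` iff `u = k v` in `Ω` for some constant `k ≥ 0`. -/
theorem picone_equality_case
    (n : ℕ) (hn : 2 ≤ n) (p : ℝ) (hp : 1 < p)
    (Ω : Set (Fin n → ℝ)) (hΩo : IsOpen Ω) (hΩc : IsConnected Ω)
    (A : (Fin n → ℝ) → Matrix (Fin n) (Fin n) ℝ) (hA : LocUnifPD Ω A)
    (u v : (Fin n → ℝ) → ℝ)
    (hu : ContDiffOn ℝ 1 u Ω) (hv : ContDiffOn ℝ 1 v Ω)
    (hu0 : ∀ x ∈ Ω, 0 ≤ u x) (hv0 : ∀ x ∈ Ω, 0 < v x) :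
    ((∀ᵐ x ∂(volume.restrict Ω), PiconeL p A u v x = 0) →
      ∃ k : ℝ, 0 ≤ k ∧ ∀ x ∈ Ω, u x = k * v x) ∧
    (∀ k : ℝ, 0 ≤ k → (∀ x ∈ Ω, u x = k * v x) →
      ∀ x ∈ Ω, PiconeL p A u v x = 0) :=
  picone_equality_case_general n p hp Ω hΩo hΩc A hA u v hu hv hu0 hv0

end
end
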